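/- With the standard setup, suppose Y_{i-2} and Y_{i+2} are both non-empty for some i, and let A_i^- = N(Y_{i-2}) ∩ A_i and A_i^+ = N(Y_{i+2}) ∩ A_i. Then: (d) Y_{i-1} ∪ Y_{i+1} = ∅; (e) every vertex in Y_i is pure (complete to A_{i-2} ∪ A_{i+2}); and (f) at least one of the sets A_i \ (A_i^- ∪ A_i^+) and Y_i is empty. -/

import Mathlib

open SimpleGraph

/-- The gem: a path 0-1-2-3 on 4 vertices plus a fifth vertex 4 adjacent to all of them. -/
def gem : SimpleGraph (Fin 5) :=
  SimpleGraph.fromEdgeSet {s(0,1), s(1,2), s(2,3), s(4,0), s(4,1), s(4,2), s(4,3)}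

/-- `G` is `H`-free: no induced subgraph of `G` is isomorphic to `H`. -/
def InducedFree {W V : Type*} (H : SimpleGraph W) (G : SimpleGraph V) : Prop :=
  ¬ Nonempty (H ↪g G)

/-- `G` is (P5, gem)-free. -/
def P5GemFree {V : Type*} (G : SimpleGraph V) : Prop :=
  InducedFree (SimpleGraph.pathGraph 5) G ∧ InducedFree gem G

/-- `X` is complete to `Y`: every vertex of `X` is adjacent to every vertex of `Y`. -/
def CompleteTo {V : Type*} (G : SimpleGraph V) (X Y : Set V) : Prop :=
  ∀ x ∈ X, ∀ y ∈ Y, G.Adj x y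

/-- `X` is anticomplete to `Y`: no vertex of `X` is adjacent to any vertex of `Y`. -/
def AnticompleteTo {V : Type*} (G : SimpleGraph V) (X Y : Set V) : Prop :=
  ∀ x ∈ X, ∀ y ∈ Y, ¬ G.Adj x y

/-- `X` is a homogeneous set: every vertex outside `X` with a neighbor in `X` is
complete to `X`. -/
def IsHomogeneousSet {V : Type*} (G : SimpleGraph V) (X : Set V) : Prop :=
  ∀ v ∉ X, (∃ x ∈ X, G.Adj v x) → ∀ x ∈ X, G.Adj v x

/-- Five nonempty pairwise disjoint sets `A 0, …, A 4` such that (indices mod 5) each `A i` is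
complete to `A (i-1) ∪ A (i+1)` and anticomplete to `A (i-2) ∪ A (i+2)`. -/
structure IsC5Partition {V : Type*} (G : SimpleGraph V) (A : Fin 5 → Set V) : Prop where
  nonempty : ∀ i, (A i).Nonempty
  disjoint : ∀ i j, i ≠ j → Disjoint (A i) (A j)
  complete_succ : ∀ i, CompleteTo G (A i) (A (i + 1))
  complete_pred : ∀ i, CompleteTo G (A i) (A (i - 1))
  anticomplete_succ : ∀ i, AnticompleteTo G (A i) (A (i + 2))
  anticomplete_pred : ∀ i, AnticompleteTo G (A i) (A (i - 2))

/-- The set `Y_i`: vertices outside `A` that are complete to `A i`, anticomplete to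
`A (i-1) ∪ A (i+1)`, have a neighbor in each of `A (i-2)` and `A (i+2)`, and are complete
to at least one of `A (i-2)`, `A (i+2)`. -/
def Yset {V : Type*} (G : SimpleGraph V) (A : Fin 5 → Set V) (i : Fin 5) : Set V :=
  {x | x ∉ (⋃ j, A j) ∧ (∀ a ∈ A i, G.Adj x a) ∧
    (∀ a ∈ A (i - 1), ¬ G.Adj x a) ∧ (∀ a ∈ A (i + 1), ¬ G.Adj x a) ∧
    (∃ a ∈ A (i - 2), G.Adj x a) ∧ (∃ a ∈ A (i + 2), G.Adj x a) ∧
    ((∀ a ∈ A (i - 2), G.Adj x a) ∨ (∀ a ∈ A (i + 2), G.Adj x a))}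

/-- The set `R`: vertices outside `A = ⋃ A i` with no neighbor in `A`. -/
def Rset {V : Type*} (G : SimpleGraph V) (A : Fin 5 → Set V) : Set V :=
  {x | x ∉ (⋃ j, A j) ∧ ∀ a ∈ ⋃ j, A j, ¬ G.Adj x a}

/-- A vertex of `Y_i` is pure if it is complete to `A (i-2) ∪ A (i+2)`. -/
def IsPureVertex {V : Type*} (G : SimpleGraph V) (A : Fin 5 → Set V) (i : Fin 5) (x : V) : Prop :=
  (∀ a ∈ A (i - 2), G.Adj x a) ∧ (∀ a ∈ A (i + 2), G.Adj x a)

/-!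
Every step exhibits an induced `P5` or gem. Vertices `u ∈ Y k` and `v ∈ Y (k + 1)` are
adjacent (otherwise `u`, `A (k + 2)`, `A (k + 1)`, `v`, `A (k - 1)` is a `P5`) and have no
common neighbour in `A (k + 3)` (it would centre a gem), so `u` is complete to `A (k + 2)` and
`v` to `A (k - 1)`. Three consecutive nonempty `Y`-sets are therefore impossible: the middle
vertex would be complete to a class in which the last one has a neighbour. This gives (d).
For (e) and (f), take `y₋ ∈ Y (i - 2)`, `y₊ ∈ Y (i + 2)` and `x ∈ Y i`: a gem shows that `x`
sees neither `y₋` nor `y₊`, and then a non-neighbour of `x` in `A (i ∓ 2)`, or a vertex of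
`A i` seen by neither `y₋` nor `y₊`, closes an induced `P5`.
-/

theorem SimpleGraph.nonempty_embedding_of_adj_iff {W V : Type*} {H : SimpleGraph W}
    {G : SimpleGraph V} (f : W → V) (hf : ∀ x y, G.Adj (f x) (f y) ↔ H.Adj x y)
    (hH : ∀ x y, x ≠ y → ∃ z, ¬ (H.Adj z x ↔ H.Adj z y)) : Nonempty (H ↪g G) := by
  refine ⟨⟨⟨f, fun x y hxy => ?_⟩, hf _ _⟩⟩
  by_contra hne
  obtain ⟨z, hz⟩ := hH x y hne
  exact hz (by rw [← hf, ← hf, hxy])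

namespace P5GemFree

variable {V : Type*} {G : SimpleGraph V}

/- The five vertices need not be assumed distinct: no two vertices of `P5`, or of the gem, have
the same neighbourhood. -/
theorem false_of_inducedP5 (hG : P5GemFree G) {a b c d e : V}
    (hab : G.Adj a b) (hbc : G.Adj b c) (hcd : G.Adj c d) (hde : G.Adj d e)
    (hac : ¬ G.Adj a c) (had : ¬ G.Adj a d) (hae : ¬ G.Adj a e)
    (hbd : ¬ G.Adj b d) (hbe : ¬ G.Adj b e) (hce : ¬ G.Adj c e) : False := by
  refine hG.1 (nonempty_embedding_of_adj_iff ![a, b, c, d, e] (fun x y => ?_)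
    (by simp only [pathGraph_adj]; decide))
  fin_cases x <;> fin_cases y <;> simp [pathGraph_adj, G.adj_comm, *]

theorem false_of_inducedGem (hG : P5GemFree G) {a b c d e : V}
    (hab : G.Adj a b) (hbc : G.Adj b c) (hcd : G.Adj c d)
    (hea : G.Adj e a) (heb : G.Adj e b) (hec : G.Adj e c) (hed : G.Adj e d)
    (hac : ¬ G.Adj a c) (had : ¬ G.Adj a d) (hbd : ¬ G.Adj b d) : False := by
  refine hG.2 (nonempty_embedding_of_adj_iff ![a, b, c, d, e] (fun x y => ?_)
    (by simp only [gem, fromEdgeSet_adj, Set.mem_insert_iff, Set.mem_singleton_iff]; decide))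
  fin_cases x <;> fin_cases y <;>
    simp [gem, G.adj_comm, hea.symm, heb.symm, hec.symm, hed.symm, *]

end P5GemFree

section C5Partition

variable {V : Type*} {G : SimpleGraph V} {A : Fin 5 → Set V} {a b c u v w x y ym yp : V}
  {i j k l m : Fin 5}

theorem IsC5Partition.adj (hA : IsC5Partition G A) (ha : a ∈ A i) (hb : b ∈ A j)
    (h : j = i + 1 ∨ j = i - 1 := by omega) : G.Adj a b := by
  rcases h with rfl | rfl
  exacts [hA.complete_succ i a ha b hb, hA.complete_pred i a ha b hb]

theorem IsC5Partition.not_adj (hA : IsC5Partition G A) (ha : a ∈ A i) (hb : b ∈ A j)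
    (h : j = i + 2 ∨ j = i - 2 := by omega) : ¬ G.Adj a b := by
  rcases h with rfl | rfl
  exacts [hA.anticomplete_succ i a ha b hb, hA.anticomplete_pred i a ha b hb]

theorem adj_of_mem_Yset (hy : y ∈ Yset G A i) (ha : a ∈ A j) (h : j = i := by omega) :
    G.Adj y a :=
  hy.2.1 a (h ▸ ha)

theorem not_adj_of_mem_Yset (hy : y ∈ Yset G A i) (ha : a ∈ A j)
    (h : j = i + 1 ∨ j = i - 1 := by omega) : ¬ G.Adj y a := by
  rcases h with rfl | rfl
  exacts [hy.2.2.2.1 a ha, hy.2.2.1 a ha]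

theorem exists_adj_of_mem_Yset (hy : y ∈ Yset G A i) (h : j = i + 2 ∨ j = i - 2 := by omega) :
    ∃ a ∈ A j, G.Adj y a := by
  rcases h with rfl | rfl
  exacts [hy.2.2.2.2.2.1, hy.2.2.2.2.1]

theorem complete_or_of_mem_Yset (hy : y ∈ Yset G A i) (hj : j = i - 2 := by omega)
    (hk : k = i + 2 := by omega) : (∀ a ∈ A j, G.Adj y a) ∨ ∀ a ∈ A k, G.Adj y a := by
  subst hj hk
  exact hy.2.2.2.2.2.2

theorem adj_of_mem_Yset_of_mem_Yset_succ (hA : IsC5Partition G A) (hG : P5GemFree G)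
    (hu : u ∈ Yset G A k) (hv : v ∈ Yset G A l) (hl : l = k + 1 := by omega) : G.Adj u v := by
  by_contra huv
  obtain ⟨a, ha, hua⟩ := exists_adj_of_mem_Yset hu (j := k + 2)
  obtain ⟨b, hb, hvb⟩ := exists_adj_of_mem_Yset hv (j := k - 1)
  obtain ⟨c, hc⟩ := hA.nonempty l
  exact hG.false_of_inducedP5 hua (hA.adj ha hc) (adj_of_mem_Yset hv hc).symm hvb
    (not_adj_of_mem_Yset hu hc) huv (not_adj_of_mem_Yset hu hb)
    (fun hav => (not_adj_of_mem_Yset hv ha) hav.symm) (hA.not_adj ha hb) (hA.not_adj hc hb)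

theorem not_adj_of_mem_Yset_succ_of_adj (hA : IsC5Partition G A) (hG : P5GemFree G)
    (hu : u ∈ Yset G A k) (hv : v ∈ Yset G A l)
    (ha : a ∈ A m) (hua : G.Adj u a) (hl : l = k + 1 := by omega) (hm : m = k + 3 := by omega) :
    ¬ G.Adj v a := by
  intro hva
  obtain ⟨b, hb, hub⟩ := exists_adj_of_mem_Yset hu (j := k + 2)
  obtain ⟨c, hc, hvc⟩ := exists_adj_of_mem_Yset hv (j := k - 1)
  exact hG.false_of_inducedGem hvc.symm (adj_of_mem_Yset_of_mem_Yset_succ hA hG hu hv).symm hub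
    (hA.adj ha hc) hva.symm hua.symm (hA.adj ha hb)
    (fun hcu => (not_adj_of_mem_Yset hu hc) hcu.symm) (hA.not_adj hc hb) (not_adj_of_mem_Yset hv hb)

theorem complete_add_two_of_mem_Yset_succ (hA : IsC5Partition G A) (hG : P5GemFree G)
    (hu : u ∈ Yset G A k) (hv : v ∈ Yset G A l)
    (hl : l = k + 1 := by omega) (hm : m = k + 2 := by omega) : ∀ a ∈ A m, G.Adj u a := by
  refine (complete_or_of_mem_Yset hu (j := k - 2) (k := m)).resolve_left fun hcomp => ?_
  obtain ⟨a, ha, hva⟩ := exists_adj_of_mem_Yset hv (j := k - 2)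
  exact (not_adj_of_mem_Yset_succ_of_adj hA hG hu hv ha (hcomp a ha)) hva

theorem complete_sub_two_of_mem_Yset_pred (hA : IsC5Partition G A) (hG : P5GemFree G)
    (hv : v ∈ Yset G A l) (hu : u ∈ Yset G A k)
    (hk : k = l - 1 := by omega) (hm : m = l - 2 := by omega) : ∀ a ∈ A m, G.Adj v a := by
  refine (complete_or_of_mem_Yset hv (j := m) (k := l + 2)).resolve_right fun hcomp => ?_
  obtain ⟨a, ha, hua⟩ := exists_adj_of_mem_Yset hu (j := l + 2)
  exact (not_adj_of_mem_Yset_succ_of_adj hA hG hu hv ha hua) (hcomp a ha)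

theorem false_of_mem_three_consecutive_Yset (hA : IsC5Partition G A) (hG : P5GemFree G)
    (hu : u ∈ Yset G A k) (hv : v ∈ Yset G A l) (hw : w ∈ Yset G A m)
    (hl : l = k + 1 := by omega) (hm : m = k + 2 := by omega) : False := by
  obtain ⟨a, ha, hwa⟩ := exists_adj_of_mem_Yset hw (j := k + 4)
  exact (not_adj_of_mem_Yset_succ_of_adj hA hG hv hw ha
    ((complete_sub_two_of_mem_Yset_pred hA hG hv hu) a ha)) hwa

/-! In the next two lemmas, `hk` says that `A i` and `A k` are the two classes at distance two
from `A j`. -/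

theorem not_adj_of_mem_Yset_of_complete (hA : IsC5Partition G A) (hG : P5GemFree G)
    (hx : x ∈ Yset G A i) (hy : y ∈ Yset G A j)
    (hyk : ∀ a ∈ A k, G.Adj y a) (hk : i = j + 2 ∧ k = j - 2 ∨ i = j - 2 ∧ k = j + 2) :
    ¬ G.Adj x y := by
  intro hxy
  obtain ⟨b, hb, hxb⟩ := exists_adj_of_mem_Yset hx (j := j)
  obtain ⟨c, hc, hyc⟩ := exists_adj_of_mem_Yset hy (j := i)
  obtain ⟨d, hd⟩ := hA.nonempty k
  exact hG.false_of_inducedGem hxb.symm (adj_of_mem_Yset hx hc) (hA.adj hc hd)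
    (adj_of_mem_Yset hy hb) hxy.symm hyc (hyk d hd)
    (hA.not_adj hb hc) (hA.not_adj hb hd) (not_adj_of_mem_Yset hx hd)

theorem complete_of_mem_Yset_of_complete (hA : IsC5Partition G A) (hG : P5GemFree G)
    (hx : x ∈ Yset G A i) (hy : y ∈ Yset G A j)
    (hyk : ∀ a ∈ A k, G.Adj y a) (hk : i = j + 2 ∧ k = j - 2 ∨ i = j - 2 ∧ k = j + 2)
    (hc : c ∈ A i) (hyc : ¬ G.Adj y c) : ∀ a ∈ A j, G.Adj x a := by
  intro a ha
  by_contra hxa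
  obtain ⟨d, hd⟩ := hA.nonempty k
  exact hG.false_of_inducedP5 (adj_of_mem_Yset hx hc) (hA.adj hc hd) (hyk d hd).symm
    (adj_of_mem_Yset hy ha) (not_adj_of_mem_Yset hx hd)
    (not_adj_of_mem_Yset_of_complete hA hG hx hy hyk hk) hxa (fun hcy => hyc hcy.symm)
    (hA.not_adj hc ha) (hA.not_adj hd ha)

theorem isPureVertex_of_mem_Yset (hA : IsC5Partition G A) (hG : P5GemFree G)
    (hx : x ∈ Yset G A i) (hym : ym ∈ Yset G A (i - 2)) (hyp : yp ∈ Yset G A (i + 2)) :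
    IsPureVertex G A i x := by
  have hym_c := complete_sub_two_of_mem_Yset_pred hA hG hym hyp (m := i + 1)
  have hyp_c := complete_add_two_of_mem_Yset_succ hA hG hyp hym (m := i - 1)
  obtain ⟨c, hc, hypc⟩ := exists_adj_of_mem_Yset hyp (j := i)
  obtain ⟨c', hc', hymc'⟩ := exists_adj_of_mem_Yset hym (j := i)
  exact ⟨complete_of_mem_Yset_of_complete hA hG hx hym hym_c (by omega) hc
      (not_adj_of_mem_Yset_succ_of_adj hA hG hyp hym hc hypc),
    complete_of_mem_Yset_of_complete hA hG hx hyp hyp_c (by omega) hc'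
      fun hypc' => (not_adj_of_mem_Yset_succ_of_adj hA hG hyp hym hc' hypc') hymc'⟩

theorem adj_or_adj_of_mem_Yset (hA : IsC5Partition G A) (hG : P5GemFree G)
    (hx : x ∈ Yset G A i) (hym : ym ∈ Yset G A (i - 2)) (hyp : yp ∈ Yset G A (i + 2))
    (ha : a ∈ A i) : G.Adj ym a ∨ G.Adj yp a := by
  by_contra! h
  obtain ⟨d, hd⟩ := hA.nonempty (i + 1)
  have hym_c := complete_sub_two_of_mem_Yset_pred hA hG hym hyp (m := i + 1)
  have hyp_c := complete_add_two_of_mem_Yset_succ hA hG hyp hym (m := i - 1)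
  exact hG.false_of_inducedP5 (adj_of_mem_Yset hx ha) (hA.adj ha hd) (hym_c d hd).symm
    (adj_of_mem_Yset_of_mem_Yset_succ hA hG hyp hym).symm (not_adj_of_mem_Yset hx hd)
    (not_adj_of_mem_Yset_of_complete hA hG hx hym hym_c (by omega))
    (not_adj_of_mem_Yset_of_complete hA hG hx hyp hyp_c (by omega))
    (fun hay => h.1 hay.symm) (fun hay => h.2 hay.symm)
    (fun hdy => (not_adj_of_mem_Yset hyp hd) hdy.symm)

end C5Partition

theorem two_ysets_def_general {V : Type*} (G : SimpleGraph V)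
    (hfree : P5GemFree G)
    (A : Fin 5 → Set V) (hA : IsC5Partition G A)
    (i : Fin 5)
    (hm : (Yset G A (i - 2)).Nonempty) (hp : (Yset G A (i + 2)).Nonempty)
    (Am Ap : Set V)
    (hAm : Am = {a | a ∈ A i ∧ ∃ y ∈ Yset G A (i - 2), G.Adj y a})
    (hAp : Ap = {a | a ∈ A i ∧ ∃ y ∈ Yset G A (i + 2), G.Adj y a}) :
    (Yset G A (i - 1) = ∅ ∧ Yset G A (i + 1) = ∅) ∧
      (∀ x ∈ Yset G A i, IsPureVertex G A i x) ∧
      (A i \ (Am ∪ Ap) = ∅ ∨ Yset G A i = ∅) := by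
  obtain ⟨ym, hym⟩ := hm
  obtain ⟨yp, hyp⟩ := hp
  refine ⟨⟨?_, ?_⟩, fun x hx => isPureVertex_of_mem_Yset hA hfree hx hym hyp, ?_⟩
  · exact Set.eq_empty_of_forall_notMem fun z hz =>
      false_of_mem_three_consecutive_Yset hA hfree hyp hym hz
  · exact Set.eq_empty_of_forall_notMem fun z hz =>
      false_of_mem_three_consecutive_Yset hA hfree hz hyp hym
  · refine or_iff_not_imp_right.2 fun hY => ?_
    obtain ⟨x, hx⟩ := Set.nonempty_iff_ne_empty.2 hY
    subst hAm hAp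
    refine Set.eq_empty_of_forall_notMem fun a ⟨ha, hnot⟩ => ?_
    rcases adj_or_adj_of_mem_Yset hA hfree hx hym hyp ha with h | h
    exacts [hnot (Or.inl ⟨ha, ym, hym, h⟩), hnot (Or.inr ⟨ha, yp, hyp, h⟩)]

/-- Claim 2.7 (d)-(f): suppose `Y (i-2)` and `Y (i+2)` are both non-empty, and let
`A⁻ = N(Y (i-2)) ∩ A i` and `A⁺ = N(Y (i+2)) ∩ A i`. Then (d) `Y (i-1) ∪ Y (i+1) = ∅`;
(e) every vertex of `Y i` is pure; (f) one of `A i \ (A⁻ ∪ A⁺)` and `Y i` is empty. -/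
theorem two_ysets_def {V : Type*} [Fintype V] (G : SimpleGraph V)
    (hconn : G.Connected) (hfree : P5GemFree G)
    (hC5 : Nonempty (SimpleGraph.cycleGraph 5 ↪g G))
    (A : Fin 5 → Set V) (hA : IsC5Partition G A)
    (hmax : ∀ B : Fin 5 → Set V, IsC5Partition G B → ¬ (⋃ i, A i) ⊂ (⋃ i, B i))
    (i : Fin 5)
    (hm : (Yset G A (i - 2)).Nonempty) (hp : (Yset G A (i + 2)).Nonempty)
    (Am Ap : Set V)
    (hAm : Am = {a | a ∈ A i ∧ ∃ y ∈ Yset G A (i - 2), G.Adj y a})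
    (hAp : Ap = {a | a ∈ A i ∧ ∃ y ∈ Yset G A (i + 2), G.Adj y a}) :
    (Yset G A (i - 1) = ∅ ∧ Yset G A (i + 1) = ∅) ∧
      (∀ x ∈ Yset G A i, IsPureVertex G A i x) ∧
      (A i \ (Am ∪ Ap) = ∅ ∨ Yset G A i = ∅) :=
  two_ysets_def_general G hfree A hA i hm hp Am Ap hAm hAp
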